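/- arXiv:2302.04078 — 5 statements merged into one kernel-verified Lean document; each statement's English description precedes it below -/
import Mathlib

section
/- Let 𝒞 be the Cantor space and let Γ be a vigorous subgroup of Homeo(𝒞). Then there is no Γ-invariant Borel probability measure on 𝒞; that is, for every Borel probability measure μ on 𝒞 there exists g ∈ Γ such that the pushforward measure of μ under g is different from μ. -/
/-- The Cantor space, realized as `ℕ → Bool` with the product topology. -/
abbrev Cantor : Type := ℕ → Bool

/-- The group of self-homeomorphisms of the Cantor space under composition. -/
instance : Group (Cantor ≃ₜ Cantor) where
  mul a b := b.trans a
  one := Homeomorph.refl Cantor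
  inv := Homeomorph.symm
  mul_assoc a b c := Homeomorph.ext fun _ => rfl
  one_mul a := Homeomorph.ext fun _ => rfl
  mul_one a := Homeomorph.ext fun _ => rfl
  inv_mul_cancel a := Homeomorph.ext fun x => a.symm_apply_apply x

@[simp] lemma homeoMul_apply (a b : Cantor ≃ₜ Cantor) (x : Cantor) :
    (a * b) x = a (b x) := rfl

/-- A subgroup `Γ ≤ Homeo(𝒞)` is *vigorous* if for all compact open subsets
`X, Y₁, Y₂ ⊆ 𝒞` with `Y₁, Y₂ ⊆ X`, `X ≠ 𝒞` and `Y₂ ≠ ∅`, there exists `g ∈ Γ`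
with `g x = x` for all `x ∉ X` and `g '' Y₁ ⊆ Y₂`. -/
def Vigorous (Γ : Subgroup (Cantor ≃ₜ Cantor)) : Prop :=
  ∀ X Y₁ Y₂ : Set Cantor,
    IsCompact X → IsOpen X → IsCompact Y₁ → IsOpen Y₁ → IsCompact Y₂ → IsOpen Y₂ →
    Y₁ ⊆ X → Y₂ ⊆ X → X ≠ Set.univ → Y₂ ≠ ∅ →
    ∃ g : Cantor ≃ₜ Cantor, g ∈ Γ ∧ (∀ x ∉ X, g x = x) ∧ g '' Y₁ ⊆ Y₂

open MeasureTheory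

lemma cyl_isOpen (n : ℕ) (b : Bool) : IsOpen {f : Cantor | f n = b} := by
  have : {f : Cantor | f n = b} = (fun f : Cantor => f n) ⁻¹' {b} := rfl
  rw [this]; exact (isOpen_discrete _).preimage (continuous_apply n)

lemma cyl_isClosed (n : ℕ) (b : Bool) : IsClosed {f : Cantor | f n = b} := by
  have : {f : Cantor | f n = b} = (fun f : Cantor => f n) ⁻¹' {b} := rfl
  rw [this]; exact (isClosed_discrete _).preimage (continuous_apply n)

lemma cyl_isCompact (n : ℕ) (b : Bool) : IsCompact {f : Cantor | f n = b} :=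
  (cyl_isClosed n b).isCompact

/-- If Γ ≤ Homeo(𝒞) is vigorous, there is no Γ-invariant Borel probability
measure on 𝒞: for every Borel probability measure μ there is g ∈ Γ whose
pushforward of μ differs from μ. -/
theorem vigorous_no_invariant_probability_measure
    (Γ : Subgroup (Cantor ≃ₜ Cantor)) (hΓ : Vigorous Γ)
    (μ : Measure Cantor) [IsProbabilityMeasure μ] :
    ∃ g ∈ Γ, Measure.map (⇑g) μ ≠ μ := by
  by_contra h
  push_neg at h
  -- a cylinder of positive measure
  obtain ⟨b, hb⟩ : ∃ b : Bool, μ {f : Cantor | f 0 = b} ≠ 0 := by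
    by_contra hc
    push_neg at hc
    have hcompl : {f : Cantor | f 0 = false} = {f : Cantor | f 0 = true}ᶜ := by
      ext f; simp [Bool.not_eq_true]
    have h1 : μ {f : Cantor | f 0 = true} + μ {f : Cantor | f 0 = true}ᶜ = μ Set.univ :=
      measure_add_measure_compl (cyl_isOpen 0 true).measurableSet
    rw [← hcompl, hc true, hc false, measure_univ] at h1
    simp at h1
  set X : Set Cantor := {f : Cantor | f 0 = b} with hX
  set Y : Bool → Set Cantor := fun c => X ∩ {f : Cantor | f 1 = c} with hY
  have hYopen : ∀ c, IsOpen (Y c) := fun c => (cyl_isOpen 0 b).inter (cyl_isOpen 1 c)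
  have hYcompact : ∀ c, IsCompact (Y c) :=
    fun c => ((cyl_isClosed 0 b).inter (cyl_isClosed 1 c)).isCompact
  have hXfin : μ X ≠ ⊤ := measure_ne_top μ X
  have hsplit : μ (Y true) + μ (Y false) = μ X := by
    have hdiff : X \ {f : Cantor | f 1 = true} = Y false := by
      ext f
      simp [hY, Bool.not_eq_true, Set.mem_diff]
    calc μ (Y true) + μ (Y false) = μ (X ∩ {f : Cantor | f 1 = true}) + μ (X \ {f : Cantor | f 1 = true}) := by
          rw [hdiff]
      _ = μ X := measure_inter_add_diff X (cyl_isOpen 1 true).measurableSet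
  obtain ⟨c, hc⟩ : ∃ c : Bool, μ (Y c) < μ X := by
    by_contra hcon
    push_neg at hcon
    have h2 : μ X < μ X + μ X := ENNReal.lt_add_right hXfin hb
    have h3 : μ X + μ X ≤ μ (Y true) + μ (Y false) := add_le_add (hcon true) (hcon false)
    rw [hsplit] at h3
    exact absurd (h2.trans_le h3) (lt_irrefl _)
  have hXne : X ≠ Set.univ := by
    intro hu
    have : (fun _ => !b : Cantor) ∈ X := hu ▸ Set.mem_univ _
    simp [hX] at this
  have hYne : Y c ≠ ∅ := by
    rw [← Set.nonempty_iff_ne_empty]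
    refine ⟨fun n => if n = 0 then b else c, ?_, ?_⟩ <;> simp [hX]
  obtain ⟨g, hgΓ, -, himg⟩ :=
    hΓ X X (Y c) (cyl_isCompact 0 b) (cyl_isOpen 0 b) (cyl_isCompact 0 b) (cyl_isOpen 0 b)
      (hYcompact c) (hYopen c) subset_rfl Set.inter_subset_left hXne hYne
  have hsub : X ⊆ g ⁻¹' (Y c) := fun x hx => himg ⟨x, hx, rfl⟩
  have hmeasY : MeasurableSet (Y c) := (hYopen c).measurableSet
  have hmap : μ (g ⁻¹' (Y c)) = μ (Y c) := by
    rw [← Measure.map_apply g.continuous.measurable hmeasY, h g hgΓ]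
  have : μ X ≤ μ (Y c) := hmap ▸ measure_mono hsub
  exact absurd (this.trans_lt hc) (lt_irrefl _)
end

section
/- Let 𝒞 be the Cantor space and let F be a locally closed subgroup of Homeo(𝒞) such that for every compact open X ⊆ 𝒞 with X ≠ 𝒞 and every nonempty compact open Y ⊆ 𝒞 there exists g ∈ F with g(X) ⊆ Y. Then for every compact open X ⊆ 𝒞 with X ≠ 𝒞 and all compact open subsets Y₁, Y₂ ⊆ X with Y₂ ∖ Y₁ ≠ ∅, there exists g ∈ F such that g ∘ g ∘ g = id, g(x) = x for all x ∉ X, and g(Y₁) ⊆ Y₂. -/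
/-- A subgroup F ≤ Homeo(𝒞) is *locally closed* if every homeomorphism of 𝒞
that locally agrees with elements of F belongs to F. -/
def LocallyClosedSubgroup (F : Subgroup (Cantor ≃ₜ Cantor)) : Prop :=
  ∀ φ : Cantor ≃ₜ Cantor,
    (∀ x : Cantor, ∃ U : Set Cantor, IsOpen U ∧ x ∈ U ∧ ∃ g ∈ F, ∀ y ∈ U, φ y = g y) →
    φ ∈ F

lemma glue_aux (f₁ f₂ : Cantor ≃ₜ Cantor) (A : Set Cantor) (hA : IsClopen A)
    (hd12 : ∀ x ∈ A, x ∉ f₁ '' A)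
    (hd13 : ∀ x ∈ A, x ∉ f₂ '' (f₁ '' A))
    (hd23 : ∀ x ∈ f₁ '' A, x ∉ f₂ '' (f₁ '' A)) :
    ∃ g : Cantor ≃ₜ Cantor,
      (∀ x, g (g (g x)) = x) ∧
      (∀ x ∈ A, g x = f₁ x) ∧
      (∀ x ∈ f₁ '' A, g x = f₂ x) ∧
      (∀ x ∈ f₂ '' (f₁ '' A), g x = f₁.symm (f₂.symm x)) ∧
      (∀ x, x ∉ A → x ∉ f₁ '' A → x ∉ f₂ '' (f₁ '' A) → g x = x) := by
  classical
  set A₂ : Set Cantor := f₁ '' A with hA₂def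
  set A₃ : Set Cantor := f₂ '' A₂ with hA₃def
  have hA₂ : IsClopen A₂ := by
    rw [hA₂def, ← Homeomorph.preimage_symm]; exact hA.preimage f₁.symm.continuous
  have hA₃ : IsClopen A₃ := by
    rw [hA₃def, ← Homeomorph.preimage_symm]; exact hA₂.preimage f₂.symm.continuous
  have m1 : ∀ x ∈ A, f₁ x ∈ A₂ := fun x hx => ⟨x, hx, rfl⟩
  have m2 : ∀ x ∈ A₂, f₂ x ∈ A₃ := fun x hx => ⟨x, hx, rfl⟩
  have m2' : ∀ x ∈ A₂, f₁.symm x ∈ A := by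
    intro x hx; rcases hx with ⟨y, hy, rfl⟩; simpa using hy
  have m3 : ∀ x ∈ A₃, f₂.symm x ∈ A₂ := by
    intro x hx; rcases hx with ⟨y, hy, rfl⟩; simpa using hy
  set t : Cantor → Cantor := fun x =>
    if x ∈ A then f₁ x else if x ∈ A₂ then f₂ x else if x ∈ A₃ then f₁.symm (f₂.symm x) else x
    with ht_def
  have e1 : ∀ x ∈ A, t x = f₁ x := fun x hx => by simp [ht_def, hx]
  have e2 : ∀ x ∈ A₂, t x = f₂ x := fun x hx => by
    have h1 : x ∉ A := fun h => hd12 x h hx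
    simp [ht_def, hx, h1]
  have e3 : ∀ x ∈ A₃, t x = f₁.symm (f₂.symm x) := fun x hx => by
    have h1 : x ∉ A := fun h => hd13 x h hx
    have h2 : x ∉ A₂ := fun h => hd23 x h hx
    simp [ht_def, hx, h1, h2]
  have e0 : ∀ x, x ∉ A → x ∉ A₂ → x ∉ A₃ → t x = x := fun x h1 h2 h3 => by
    simp [ht_def, h1, h2, h3]
  have ht3 : ∀ x, t (t (t x)) = x := by
    intro x
    by_cases h1 : x ∈ A
    · rw [e1 x h1, e2 _ (m1 x h1), e3 _ (m2 _ (m1 x h1))]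
      simp
    · by_cases h2 : x ∈ A₂
      · rw [e2 x h2, e3 _ (m2 x h2)]
        simp only [Homeomorph.symm_apply_apply]
        rw [e1 _ (m2' x h2)]
        simp
      · by_cases h3 : x ∈ A₃
        · have hm : f₁.symm (f₂.symm x) ∈ A := m2' _ (m3 x h3)
          rw [e3 x h3, e1 _ hm]
          simp only [Homeomorph.apply_symm_apply]
          rw [e2 _ (m3 x h3)]
          simp
        · rw [e0 x h1 h2 h3, e0 x h1 h2 h3, e0 x h1 h2 h3]
  have ht : Continuous t := by
    rw [continuous_iff_continuousAt]
    intro x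
    by_cases h1 : x ∈ A
    · exact f₁.continuous.continuousAt.congr
        ((Filter.eventuallyEq_of_mem (hA.isOpen.mem_nhds h1) e1).symm)
    · by_cases h2 : x ∈ A₂
      · exact f₂.continuous.continuousAt.congr
          ((Filter.eventuallyEq_of_mem (hA₂.isOpen.mem_nhds h2) e2).symm)
      · by_cases h3 : x ∈ A₃
        · exact ((f₁.symm.continuous.comp f₂.symm.continuous).continuousAt).congr
            ((Filter.eventuallyEq_of_mem (hA₃.isOpen.mem_nhds h3) e3).symm)
        · have hU : IsOpen ((A ∪ A₂ ∪ A₃)ᶜ) :=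
            (hA.isClosed.union hA₂.isClosed |>.union hA₃.isClosed).isOpen_compl
          have hxU : x ∈ (A ∪ A₂ ∪ A₃)ᶜ := by
            simp only [Set.mem_compl_iff, Set.mem_union]; tauto
          refine continuous_id.continuousAt.congr
            ((Filter.eventuallyEq_of_mem (hU.mem_nhds hxU) ?_).symm)
          intro y hy
          simp only [Set.mem_compl_iff, Set.mem_union] at hy
          push_neg at hy
          exact e0 y hy.1.1 hy.1.2 hy.2
  exact ⟨⟨⟨t, fun x => t (t x), fun x => ht3 x, fun x => ht3 x⟩, ht, ht.comp ht⟩,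
    ht3, e1, e2, e3, e0⟩

lemma exists_ne_mem_of_isOpen {V : Set Cantor} (hV : IsOpen V) {p : Cantor} (hp : p ∈ V) :
    ∃ q ∈ V, q ≠ p := by
  set qf : ℕ → Cantor := fun n => Function.update p n (!(p n)) with hqf
  have htend : Filter.Tendsto qf Filter.atTop (nhds p) := by
    rw [tendsto_pi_nhds]
    intro i
    apply Filter.Tendsto.congr' _ tendsto_const_nhds
    filter_upwards [Filter.eventually_gt_atTop i] with n hn
    simp [hqf, Function.update_of_ne hn.ne]
  have hev : ∀ᶠ n in Filter.atTop, qf n ∈ V := htend.eventually_mem (hV.mem_nhds hp)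
  obtain ⟨n, hn⟩ := hev.exists
  refine ⟨qf n, hn, fun h => ?_⟩
  have := congrFun h n
  simp [hqf] at this

/-- If F ≤ Homeo(𝒞) is locally closed and moves any proper compact open set
into any nonempty compact open set, then for any compact open X ⊊ 𝒞 and compact
open Y₁, Y₂ ⊆ X with Y₂ ∖ Y₁ ≠ ∅ there is an element g ∈ F of order dividing 3
supported in X with g(Y₁) ⊆ Y₂. -/
theorem exists_order_three_element (F : Subgroup (Cantor ≃ₜ Cantor))
    (hF : LocallyClosedSubgroup F)
    (htrans : ∀ X Y : Set Cantor, IsCompact X → IsOpen X → X ≠ Set.univ →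
      IsCompact Y → IsOpen Y → Y.Nonempty →
      ∃ g : Cantor ≃ₜ Cantor, g ∈ F ∧ g '' X ⊆ Y) :
    ∀ X Y₁ Y₂ : Set Cantor, IsCompact X → IsOpen X → X ≠ Set.univ →
      IsCompact Y₁ → IsOpen Y₁ → IsCompact Y₂ → IsOpen Y₂ →
      Y₁ ⊆ X → Y₂ ⊆ X → (Y₂ \ Y₁).Nonempty →
      ∃ g : Cantor ≃ₜ Cantor, g ∈ F ∧ (∀ x : Cantor, g (g (g x)) = x) ∧
        (∀ x ∉ X, g x = x) ∧ g '' Y₁ ⊆ Y₂ := by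
  intro X Y₁ Y₂ hXc hXo hXne hY1c hY1o hY2c hY2o hY1X hY2X hdiff
  obtain ⟨x₀, hx₀⟩ := Set.ne_univ_iff_exists_notMem X |>.mp hXne
  obtain ⟨p, hp2, hp1⟩ := hdiff
  -- a clopen V with p ∈ V ⊆ Y₂ \ Y₁
  have hdo : IsOpen (Y₂ \ Y₁) := hY2o.sdiff hY1c.isClosed
  obtain ⟨V, hV, hpV, hVsub⟩ := compact_exists_isClopen_in_isOpen hdo ⟨hp2, hp1⟩
  -- a second point q ∈ V
  obtain ⟨q, hqV, hqp⟩ := exists_ne_mem_of_isOpen hV.isOpen hpV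
  -- clopen W₂ with p ∈ W₂ ⊆ V \ {q}
  obtain ⟨W₂, hW₂, hpW₂, hW₂sub⟩ :=
    compact_exists_isClopen_in_isOpen (hV.isOpen.sdiff isClosed_singleton)
      (⟨hpV, fun h => hqp (Set.mem_singleton_iff.mp h).symm⟩ : p ∈ V \ {q})
  -- clopen W₃ with q ∈ W₃ ⊆ V \ W₂
  have hqW₂ : q ∉ W₂ := fun h => (hW₂sub h).2 rfl
  obtain ⟨W₃, hW₃, hqW₃, hW₃sub⟩ :=
    compact_exists_isClopen_in_isOpen (hV.isOpen.sdiff hW₂.isClosed)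
      (⟨hqV, hqW₂⟩ : q ∈ V \ W₂)
  -- key inclusions
  have hW₂V : W₂ ⊆ V := fun x hx => (hW₂sub hx).1
  have hW₃V : W₃ ⊆ V := fun x hx => (hW₃sub hx).1
  have hY1ne : Y₁ ≠ Set.univ := fun h => hx₀ (hY1X (h ▸ Set.mem_univ x₀))
  have hW₂ne : W₂ ≠ Set.univ := fun h =>
    hx₀ (hY2X (hVsub (hW₂V (h ▸ Set.mem_univ x₀))).1)
  -- the two moving elements
  obtain ⟨f₁, hf₁F, hf₁⟩ := htrans Y₁ W₂ hY1c hY1o hY1ne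
    (hW₂.isClosed.isCompact) hW₂.isOpen ⟨p, hpW₂⟩
  obtain ⟨f₂, hf₂F, hf₂⟩ := htrans W₂ W₃ hW₂.isClosed.isCompact hW₂.isOpen hW₂ne
    hW₃.isClosed.isCompact hW₃.isOpen ⟨q, hqW₃⟩
  set A₂ : Set Cantor := f₁ '' Y₁ with hA₂def
  set A₃ : Set Cantor := f₂ '' A₂ with hA₃def
  have hA₂W₂ : A₂ ⊆ W₂ := hf₁
  have hA₃W₃ : A₃ ⊆ W₃ := fun x hx => hf₂ (Set.image_mono (f := f₂) hA₂W₂ hx)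
  have hAclopen : IsClopen Y₁ := ⟨hY1c.isClosed, hY1o⟩
  have hA₂cl : IsClopen A₂ := by
    rw [hA₂def, ← Homeomorph.preimage_symm]; exact hAclopen.preimage f₁.symm.continuous
  have hA₃cl : IsClopen A₃ := by
    rw [hA₃def, ← Homeomorph.preimage_symm]; exact hA₂cl.preimage f₂.symm.continuous
  -- disjointness
  have hd12 : ∀ x ∈ Y₁, x ∉ A₂ := fun x hx hx2 => (hVsub (hW₂V (hA₂W₂ hx2))).2 hx
  have hd13 : ∀ x ∈ Y₁, x ∉ A₃ := fun x hx hx3 => (hVsub (hW₃V (hA₃W₃ hx3))).2 hx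
  have hd23 : ∀ x ∈ A₂, x ∉ A₃ := fun x hx2 hx3 => (hW₃sub (hA₃W₃ hx3)).2 (hA₂W₂ hx2)
  obtain ⟨g, hg3, hg1, hg2, hg3', hg0⟩ := glue_aux f₁ f₂ Y₁ hAclopen hd12 hd13 hd23
  refine ⟨g, ?_, hg3, ?_, ?_⟩
  · -- g ∈ F by local closedness
    apply hF
    intro x
    by_cases h1 : x ∈ Y₁
    · exact ⟨Y₁, hY1o, h1, f₁, hf₁F, fun y hy => hg1 y hy⟩
    · by_cases h2 : x ∈ A₂
      · exact ⟨A₂, hA₂cl.isOpen, h2, f₂, hf₂F, fun y hy => hg2 y hy⟩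
      · by_cases h3 : x ∈ A₃
        · refine ⟨A₃, hA₃cl.isOpen, h3, f₁⁻¹ * f₂⁻¹,
            mul_mem (inv_mem hf₁F) (inv_mem hf₂F), fun y hy => ?_⟩
          rw [hg3' y hy]; rfl
        · refine ⟨(Y₁ ∪ A₂ ∪ A₃)ᶜ,
            ((hAclopen.isClosed.union hA₂cl.isClosed).union hA₃cl.isClosed).isOpen_compl,
            ?_, 1, one_mem F, fun y hy => ?_⟩
          · simp only [Set.mem_compl_iff, Set.mem_union]; tauto
          · simp only [Set.mem_compl_iff, Set.mem_union] at hy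
            push_neg at hy
            rw [hg0 y hy.1.1 hy.1.2 hy.2]; rfl
  · -- support contained in X
    intro x hx
    have h1 : x ∉ Y₁ := fun h => hx (hY1X h)
    have h2 : x ∉ A₂ := fun h => hx (hY2X (hVsub (hW₂V (hA₂W₂ h))).1)
    have h3 : x ∉ A₃ := fun h => hx (hY2X (hVsub (hW₃V (hA₃W₃ h))).1)
    exact hg0 x h1 h2 h3
  · -- g '' Y₁ ⊆ Y₂
    rintro _ ⟨x, hx, rfl⟩
    rw [hg1 x hx]
    exact (hVsub (hW₂V (hA₂W₂ ⟨x, hx, rfl⟩))).1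
end

section
/- Let 𝒞 be the Cantor space, let D be a vigorous subgroup of Homeo(𝒞), and let x₀ ∈ 𝒞. Let D_{x₀} = {g ∈ D : g is the identity on some open neighbourhood of x₀}. Then the natural action of D_{x₀} on the subspace 𝒞 ∖ {x₀} is compressible. -/
/-- An action of a group on a topological space X, encoded by the set S of the
transformations of X it induces, is *compressible* if there exists a subbasis 𝒰
of the topology of X such that: (1) the support of every transformation lies in
some member of 𝒰; (2) any member of 𝒰 can be moved inside any other; (3) for
U₁, U₂, U₃ ∈ 𝒰 with disjoint closures of U₁ and U₂, some transformation moves U₁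
off U₃ with support disjoint from U₂; (4) 𝒰 is upward directed under unions. -/
def Compressible {X : Type*} [t : TopologicalSpace X] (S : Set (X → X)) : Prop :=
  ∃ 𝒰 : Set (Set X),
    TopologicalSpace.generateFrom 𝒰 = t ∧
    (∀ g ∈ S, ∃ U ∈ 𝒰, {x : X | g x ≠ x} ⊆ U) ∧
    (∀ U₁ ∈ 𝒰, ∀ U₂ ∈ 𝒰, ∃ g ∈ S, g '' U₁ ⊆ U₂) ∧
    (∀ U₁ ∈ 𝒰, ∀ U₂ ∈ 𝒰, ∀ U₃ ∈ 𝒰, closure U₁ ∩ closure U₂ = ∅ →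
      ∃ g ∈ S, g '' U₁ ∩ U₃ = ∅ ∧ {x : X | g x ≠ x} ∩ U₂ = ∅) ∧
    (∀ U₁ ∈ 𝒰, ∀ U₂ ∈ 𝒰, ∃ U₃ ∈ 𝒰, U₁ ∪ U₂ ⊆ U₃)

/-- The Cantor space has no isolated points. -/
lemma cantor_exists_ne_mem {W : Set Cantor} (hW : IsOpen W) {x : Cantor} (hx : x ∈ W) :
    ∃ p ∈ W, p ≠ x := by
  set p : ℕ → Cantor := fun n => Function.update x n (!x n) with hp
  have htend : Filter.Tendsto p Filter.atTop (nhds x) := by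
    rw [tendsto_pi_nhds]
    intro k
    apply Filter.Tendsto.congr' (f₁ := fun _ => x k)
    · filter_upwards [Filter.eventually_gt_atTop k] with n hn
      simp [hp, Function.update, (Nat.ne_of_gt hn).symm]
    · exact tendsto_const_nhds
  obtain ⟨n, hn⟩ := (htend.eventually (hW.mem_nhds hx)).exists
  refine ⟨p n, hn, fun h => ?_⟩
  have : p n n = x n := by rw [h]
  simp [hp, Function.update] at this

/-- Workhorse: a vigorous group contains an element fixing a neighbourhood of `x₀`,
fixing a clopen set `F` pointwise, and mapping clopen `A` into clopen nonempty `B`. -/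
lemma vigorous_move (D : Subgroup (Cantor ≃ₜ Cantor)) (hD : Vigorous D) (x₀ : Cantor)
    {A B F : Set Cantor} (hA : IsClopen A) (hB : IsClopen B) (hF : IsClopen F)
    (hxA : x₀ ∉ A) (hxB : x₀ ∉ B) (hxF : x₀ ∉ F)
    (hAF : A ∩ F = ∅) (hBF : B ∩ F = ∅) (hBne : B.Nonempty) :
    ∃ g : Cantor ≃ₜ Cantor, g ∈ D ∧
      (∃ C : Set Cantor, IsOpen C ∧ x₀ ∈ C ∧ ∀ y ∈ C, g y = y) ∧
      (∀ y ∈ F, g y = y) ∧ g '' A ⊆ B := by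
  have hWopen : IsOpen (A ∪ B ∪ F)ᶜ := ((hA.union hB).union hF).1.isOpen_compl
  have hxW : x₀ ∈ (A ∪ B ∪ F)ᶜ := by
    simp only [Set.mem_compl_iff, Set.mem_union]
    tauto
  obtain ⟨C, hC, hxC, hCW⟩ := compact_exists_isClopen_in_isOpen hWopen hxW
  set X : Set Cantor := (C ∪ F)ᶜ with hX
  have hXcl : IsClopen X := (hC.union hF).compl
  have hAX : A ⊆ X := by
    intro a ha
    simp only [hX, Set.mem_compl_iff, Set.mem_union]
    push_neg
    constructor
    · intro haC
      have := hCW haC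
      simp only [Set.mem_compl_iff, Set.mem_union] at this
      tauto
    · intro haF
      exact (Set.eq_empty_iff_forall_notMem.1 hAF a) ⟨ha, haF⟩
  have hBX : B ⊆ X := by
    intro a ha
    simp only [hX, Set.mem_compl_iff, Set.mem_union]
    push_neg
    constructor
    · intro haC
      have := hCW haC
      simp only [Set.mem_compl_iff, Set.mem_union] at this
      tauto
    · intro haF
      exact (Set.eq_empty_iff_forall_notMem.1 hBF a) ⟨ha, haF⟩
  obtain ⟨g, hgD, hgfix, hgim⟩ :=
    hD X A B (hXcl.1.isCompact) hXcl.2 (hA.1.isCompact) hA.2 (hB.1.isCompact) hB.2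
      hAX hBX
      (by
        intro h
        have : x₀ ∈ X := h ▸ Set.mem_univ x₀
        simp only [hX, Set.mem_compl_iff, Set.mem_union] at this
        exact this (Or.inl hxC))
      hBne.ne_empty
  refine ⟨g, hgD, ⟨C, hC.2, hxC, fun y hy => hgfix y ?_⟩, fun y hy => hgfix y ?_, hgim⟩
  · simp only [hX, Set.mem_compl_iff, Set.mem_union, not_not]
    exact Or.inl hy
  · simp only [hX, Set.mem_compl_iff, Set.mem_union, not_not]
    exact Or.inr hy

/-- If D ≤ Homeo(𝒞) is vigorous and x₀ ∈ 𝒞, then the natural action on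
𝒞 ∖ {x₀} of the subgroup D_{x₀} of elements of D that are the identity on a
neighbourhood of x₀ is compressible. -/
theorem vigorous_stabilizer_compressible
    (D : Subgroup (Cantor ≃ₜ Cantor)) (hD : Vigorous D) (x₀ : Cantor) :
    Compressible {f : {x : Cantor // x ≠ x₀} → {x : Cantor // x ≠ x₀} |
      ∃ g : Cantor ≃ₜ Cantor, g ∈ D ∧
        (∃ U : Set Cantor, IsOpen U ∧ x₀ ∈ U ∧ ∀ y ∈ U, g y = y) ∧
        ∀ y : {x : Cantor // x ≠ x₀}, (f y : Cantor) = g (y : Cantor)} := by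
  classical
  set T := {x : Cantor // x ≠ x₀}
  set S := {f : T → T |
      ∃ g : Cantor ≃ₜ Cantor, g ∈ D ∧
        (∃ U : Set Cantor, IsOpen U ∧ x₀ ∈ U ∧ ∀ y ∈ U, g y = y) ∧
        ∀ y : T, (f y : Cantor) = g (y : Cantor)} with hS
  -- the function induced on T by g fixing a nbhd of x₀
  have mkf : ∀ (g : Cantor ≃ₜ Cantor), g ∈ D →
      ∀ (C : Set Cantor), IsOpen C → x₀ ∈ C → (∀ y ∈ C, g y = y) →
      ∃ f : T → T, f ∈ S ∧ ∀ y : T, (f y : Cantor) = g (y : Cantor) := by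
    intro g hgD C hCo hxC hgC
    have hgx₀ : g x₀ = x₀ := hgC x₀ hxC
    refine ⟨fun y => ⟨g y.1, fun h => y.2 (g.injective (h.trans hgx₀.symm))⟩,
      ⟨g, hgD, ⟨C, hCo, hxC, hgC⟩, fun y => rfl⟩, fun y => rfl⟩
  refine ⟨{U : Set T | ∃ K : Set Cantor,
      IsClopen K ∧ x₀ ∉ K ∧ K.Nonempty ∧ U = Subtype.val ⁻¹' K}, ?_, ?_, ?_, ?_, ?_⟩
  · -- generates the topology
    have hbasis : TopologicalSpace.IsTopologicalBasis {U : Set T | ∃ K : Set Cantor,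
        IsClopen K ∧ x₀ ∉ K ∧ K.Nonempty ∧ U = Subtype.val ⁻¹' K} := by
      apply TopologicalSpace.isTopologicalBasis_of_isOpen_of_nhds
      · rintro U ⟨K, hK, -, -, rfl⟩
        exact hK.2.preimage continuous_subtype_val
      · rintro a u ha hu
        obtain ⟨V, hV, rfl⟩ := isOpen_induced_iff.1 hu
        have haV : (a : Cantor) ∈ V ∩ {x₀}ᶜ := ⟨ha, a.2⟩
        obtain ⟨K, hK, haK, hKsub⟩ :=
          compact_exists_isClopen_in_isOpen (hV.inter isOpen_compl_singleton) haV
        refine ⟨Subtype.val ⁻¹' K, ⟨K, hK, fun h => (hKsub h).2 rfl, ⟨a, haK⟩, rfl⟩,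
          haK, fun y hy => (hKsub hy).1⟩
    exact hbasis.eq_generateFrom.symm
  · -- (1) supports
    rintro f ⟨g, hgD, ⟨U, hUo, hxU, hgU⟩, hfg⟩
    obtain ⟨C, hC, hxC, hCU⟩ := compact_exists_isClopen_in_isOpen hUo hxU
    set B₀ : Set Cantor := (fun x : Cantor => x 0) ⁻¹' {!x₀ 0} with hB₀
    have hB₀cl : IsClopen B₀ := (isClopen_discrete _).preimage (continuous_apply 0)
    refine ⟨Subtype.val ⁻¹' (Cᶜ ∪ B₀), ⟨Cᶜ ∪ B₀, hC.compl.union hB₀cl, ?_, ?_, rfl⟩, ?_⟩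
    · simp only [Set.mem_union, Set.mem_compl_iff, not_or, not_not]
      exact ⟨hxC, by simp [hB₀]⟩
    · exact ⟨Function.update x₀ 0 (!x₀ 0), Or.inr (by simp [hB₀, Function.update])⟩
    · intro y hy
      simp only [Set.mem_setOf_eq] at hy
      simp only [Set.mem_preimage, Set.mem_union, Set.mem_compl_iff]
      left
      intro hyC
      apply hy
      apply Subtype.ext
      rw [hfg y]
      exact hgU _ (hCU hyC)
  · -- (2) moving
    rintro U₁ ⟨K₁, hK₁, hx₁, -, rfl⟩ U₂ ⟨K₂, hK₂, hx₂, hK₂ne, rfl⟩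
    obtain ⟨g, hgD, ⟨C, hCo, hxC, hgC⟩, -, hgim⟩ :=
      vigorous_move D hD x₀ hK₁ hK₂ isClopen_empty hx₁ hx₂ (Set.notMem_empty x₀)
        (Set.inter_empty _) (Set.inter_empty _) hK₂ne
    obtain ⟨f, hfS, hfg⟩ := mkf g hgD C hCo hxC hgC
    refine ⟨f, hfS, ?_⟩
    rintro - ⟨y, hy, rfl⟩
    show (f y : Cantor) ∈ K₂
    rw [hfg y]
    exact hgim ⟨y.1, hy, rfl⟩
  · -- (3) separation
    rintro U₁ ⟨K₁, hK₁, hx₁, -, rfl⟩ U₂ ⟨K₂, hK₂, hx₂, -, rfl⟩ U₃ ⟨K₃, hK₃, hx₃, -, rfl⟩ hclos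
    have hcl : ∀ K : Set Cantor, IsClopen K →
        closure (Subtype.val ⁻¹' K : Set T) = Subtype.val ⁻¹' K := fun K hK =>
      (hK.1.preimage continuous_subtype_val).closure_eq
    rw [hcl K₁ hK₁, hcl K₂ hK₂] at hclos
    have hK₁₂ : K₁ ∩ K₂ = ∅ := by
      rw [Set.eq_empty_iff_forall_notMem]
      rintro z ⟨hz₁, hz₂⟩
      have hzne : z ≠ x₀ := fun h => hx₁ (h ▸ hz₁)
      exact Set.eq_empty_iff_forall_notMem.1 hclos ⟨z, hzne⟩ ⟨hz₁, hz₂⟩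
    -- find a point p ≠ x₀ outside K₂ ∪ K₃
    have hWopen : IsOpen (K₂ ∪ K₃)ᶜ := (hK₂.union hK₃).1.isOpen_compl
    have hxW : x₀ ∈ (K₂ ∪ K₃)ᶜ := by
      simp only [Set.mem_compl_iff, Set.mem_union]
      tauto
    obtain ⟨p, hpW, hpne⟩ := cantor_exists_ne_mem hWopen hxW
    obtain ⟨B, hB, hpB, hBsub⟩ :=
      compact_exists_isClopen_in_isOpen (hWopen.inter isOpen_compl_singleton)
        ⟨hpW, hpne⟩
    have hxB : x₀ ∉ B := fun h => (hBsub h).2 rfl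
    have hBK₂ : B ∩ K₂ = ∅ := by
      rw [Set.eq_empty_iff_forall_notMem]
      rintro z ⟨hzB, hzK⟩
      have := (hBsub hzB).1
      simp only [Set.mem_compl_iff, Set.mem_union] at this
      exact this (Or.inl hzK)
    obtain ⟨g, hgD, ⟨C, hCo, hxC, hgC⟩, hgF, hgim⟩ :=
      vigorous_move D hD x₀ hK₁ hB hK₂ hx₁ hxB hx₂ hK₁₂ hBK₂ ⟨p, hpB⟩
    obtain ⟨f, hfS, hfg⟩ := mkf g hgD C hCo hxC hgC
    refine ⟨f, hfS, ?_, ?_⟩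
    · rw [Set.eq_empty_iff_forall_notMem]
      rintro y ⟨⟨z, hz, rfl⟩, hy₃⟩
      have h1 : (f z : Cantor) ∈ B := by
        rw [hfg z]; exact hgim ⟨z.1, hz, rfl⟩
      have := (hBsub h1).1
      simp only [Set.mem_compl_iff, Set.mem_union] at this
      exact this (Or.inr hy₃)
    · rw [Set.eq_empty_iff_forall_notMem]
      rintro y ⟨hyne, hy₂⟩
      apply hyne
      apply Subtype.ext
      rw [hfg y]
      exact hgF _ hy₂
  · -- (4) directed
    rintro U₁ ⟨K₁, hK₁, hx₁, hne₁, rfl⟩ U₂ ⟨K₂, hK₂, hx₂, -, rfl⟩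
    refine ⟨Subtype.val ⁻¹' (K₁ ∪ K₂), ⟨K₁ ∪ K₂, hK₁.union hK₂,
      fun h => h.elim hx₁ hx₂, hne₁.mono Set.subset_union_left, rfl⟩, ?_⟩
    rw [Set.preimage_union]
end

section
/- Let 𝒞 be the Cantor space, let A be a vigorous subgroup of Homeo(𝒞), let U ⊆ 𝒞 be a nonempty compact open subset, and let x ∈ U. Then the closure of the set {g(x) : g ∈ A and g(y) = y for all y ∉ U} is equal to U. In particular, the action of A on 𝒞 is a Rubin action: for every open set V ⊆ 𝒞 and every x ∈ V, the closure of {g(x) : g ∈ A and g(y) = y for all y ∉ V} contains an open neighbourhood of x. -/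

lemma cantor_cyl_isClopen (x : Cantor) (n : ℕ) : IsClopen (PiNat.cylinder x n) := by
  constructor
  · rw [PiNat.cylinder_eq_pi]
    exact isClosed_set_pi fun a _ => isClosed_singleton
  · exact PiNat.isOpen_cylinder _ _ _

lemma cantor_cyl_isCompact (x : Cantor) (n : ℕ) : IsCompact (PiNat.cylinder x n) :=
  (cantor_cyl_isClopen x n).1.isCompact

lemma cantor_exists_cyl {N : Set Cantor} (hN : IsOpen N) {u : Cantor} (hu : u ∈ N) :
    ∃ n, PiNat.cylinder u n ⊆ N := by
  obtain ⟨s, ⟨x, n, rfl⟩, hus, hsN⟩ :=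
    (PiNat.isTopologicalBasis_cylinders _).exists_subset_of_mem_open hu hN
  exact ⟨n, by rw [PiNat.mem_cylinder_iff_eq.mp hus]; exact hsN⟩

lemma vigorous_key (A : Subgroup (Cantor ≃ₜ Cantor)) (hA : Vigorous A) :
    ∀ U : Set Cantor, IsCompact U → IsOpen U → U.Nonempty → ∀ x ∈ U,
      closure {y : Cantor |
        ∃ g : Cantor ≃ₜ Cantor, g ∈ A ∧ (∀ z ∉ U, g z = z) ∧ y = g x} = U := by
  intro U hUc hUo _ x hxU
  set S : Set Cantor :=
    {y : Cantor | ∃ g : Cantor ≃ₜ Cantor, g ∈ A ∧ (∀ z ∉ U, g z = z) ∧ y = g x} with hS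
  have hSU : S ⊆ U := by
    rintro y ⟨g, -, hsupp, rfl⟩
    by_contra hgx
    have h1 : g (g x) = g x := hsupp _ hgx
    have h2 : g x = x := g.injective h1
    rw [h2] at hgx; exact hgx hxU
  apply subset_antisymm (closure_minimal hSU hUc.isClosed)
  intro u hu
  rw [mem_closure_iff]
  intro N hNo huN
  obtain ⟨n, hn⟩ := cantor_exists_cyl (hNo.inter hUo) (Set.mem_inter huN hu)
  set Y₂ := PiNat.cylinder u (n + 1) with hY₂
  have hY₂sub : Y₂ ⊆ N ∩ U := (PiNat.cylinder_anti u (Nat.le_succ n)).trans hn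
  have hY₂ne : Y₂ ≠ ∅ := (Set.nonempty_of_mem (PiNat.self_mem_cylinder u (n + 1))).ne_empty
  by_cases hU : U = Set.univ
  · subst hU
    -- construct a point z outside Y₂ with z ≠ x
    set z₀ : Cantor := fun i => !u i with hz₀def
    set z₁ : Cantor := Function.update z₀ (n + 1) (u (n + 1)) with hz₁def
    have hz₀ : z₀ ∉ Y₂ := by
      intro h
      have := h 0 (Nat.succ_pos n)
      simp [hz₀def] at this
    have hz₁ : z₁ ∉ Y₂ := by
      intro h
      have := h 0 (Nat.succ_pos n)
      simp [hz₁def, hz₀def, Function.update] at this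
    have hzne : z₀ ≠ z₁ := by
      intro h
      have := congrFun h (n + 1)
      simp [hz₀def, hz₁def] at this
    obtain ⟨z, hzY, hzx⟩ : ∃ z, z ∉ Y₂ ∧ z ≠ x := by
      by_cases h : z₀ = x
      · exact ⟨z₁, hz₁, fun hh => hzne (h.trans hh.symm)⟩
      · exact ⟨z₀, hz₀, h⟩
    obtain ⟨k, hk⟩ : ∃ k, z k ≠ x k := Function.ne_iff.mp hzx
    set Y₁ := PiNat.cylinder x (k + 1) with hY₁
    have hzY₁ : z ∉ Y₁ := fun h => hk (h k (Nat.lt_succ_self k))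
    set X := Y₁ ∪ Y₂ with hX
    have hXne : X ≠ Set.univ := by
      intro h
      have : z ∈ X := h ▸ Set.mem_univ z
      rcases this with h' | h'
      · exact hzY₁ h'
      · exact hzY h'
    obtain ⟨g, hgA, -, hgim⟩ :=
      hA X Y₁ Y₂ ((cantor_cyl_isCompact x (k + 1)).union (cantor_cyl_isCompact u (n + 1)))
        ((cantor_cyl_isClopen x (k + 1)).2.union (cantor_cyl_isClopen u (n + 1)).2)
        (cantor_cyl_isCompact x (k + 1)) (cantor_cyl_isClopen x (k + 1)).2
        (cantor_cyl_isCompact u (n + 1)) (cantor_cyl_isClopen u (n + 1)).2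
        Set.subset_union_left Set.subset_union_right hXne hY₂ne
    refine ⟨g x, (hY₂sub (hgim ⟨x, PiNat.self_mem_cylinder x (k + 1), rfl⟩)).1,
      g, hgA, fun w hw => absurd (Set.mem_univ w) hw, rfl⟩
  · obtain ⟨g, hgA, hgsupp, hgim⟩ :=
      hA U U Y₂ hUc hUo hUc hUo (cantor_cyl_isCompact u (n + 1))
        (cantor_cyl_isClopen u (n + 1)).2 subset_rfl (hY₂sub.trans Set.inter_subset_right)
        hU hY₂ne
    exact ⟨g x, (hY₂sub (hgim ⟨x, hxU, rfl⟩)).1, g, hgA, hgsupp, rfl⟩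

/-- If A ≤ Homeo(𝒞) is vigorous, then for every nonempty compact open U ⊆ 𝒞 and
x ∈ U, the closure of the orbit of x under elements of A supported in U equals U.
In particular the action of A on 𝒞 is a Rubin action. -/
theorem vigorous_rubin_action (A : Subgroup (Cantor ≃ₜ Cantor)) (hA : Vigorous A) :
    (∀ U : Set Cantor, IsCompact U → IsOpen U → U.Nonempty → ∀ x ∈ U,
      closure {y : Cantor |
        ∃ g : Cantor ≃ₜ Cantor, g ∈ A ∧ (∀ z ∉ U, g z = z) ∧ y = g x} = U) ∧
    (∀ V : Set Cantor, IsOpen V → ∀ x ∈ V,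
      ∃ W : Set Cantor, IsOpen W ∧ x ∈ W ∧
        W ⊆ closure {y : Cantor |
          ∃ g : Cantor ≃ₜ Cantor, g ∈ A ∧ (∀ z ∉ V, g z = z) ∧ y = g x}) := by
  
  have key := vigorous_key A hA
  refine ⟨key, ?_⟩
  intro V hV x hxV
  obtain ⟨n, hn⟩ := cantor_exists_cyl hV hxV
  set K := PiNat.cylinder x n with hK
  refine ⟨K, (cantor_cyl_isClopen x n).2, PiNat.self_mem_cylinder x n, ?_⟩
  have hKeq := key K (cantor_cyl_isCompact x n) (cantor_cyl_isClopen x n).2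
    (Set.nonempty_of_mem (PiNat.self_mem_cylinder x n)) x (PiNat.self_mem_cylinder x n)
  calc K = closure {y : Cantor |
        ∃ g : Cantor ≃ₜ Cantor, g ∈ A ∧ (∀ z ∉ K, g z = z) ∧ y = g x} := hKeq.symm
    _ ⊆ closure {y : Cantor |
        ∃ g : Cantor ≃ₜ Cantor, g ∈ A ∧ (∀ z ∉ V, g z = z) ∧ y = g x} := by
        apply closure_mono
        rintro y ⟨g, hgA, hgsupp, rfl⟩
        exact ⟨g, hgA, fun w hw => hgsupp w (fun hwK => hw (hn hwK)), rfl⟩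
end

section
/- Let 𝒞 be the Cantor space and let A be a vigorous subgroup of Homeo(𝒞). Then the action of A on 𝒞 is minimal: for every x ∈ 𝒞 the orbit {g(x) : g ∈ A} is dense in 𝒞. -/
/-- The action of a vigorous subgroup A ≤ Homeo(𝒞) on 𝒞 is minimal: every orbit
is dense. -/
theorem vigorous_minimal (A : Subgroup (Cantor ≃ₜ Cantor)) (hA : Vigorous A)
    (x : Cantor) :
    Dense {y : Cantor | ∃ g ∈ A, y = g x} := by
  have cylClopen : ∀ (u : Cantor) (n : ℕ),
      IsClopen {y : Cantor | ∀ i ≤ n, y i = u i} := by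
    intro u n
    have : {y : Cantor | ∀ i ≤ n, y i = u i}
        = ⋂ i ∈ Finset.range (n + 1), (fun y : Cantor => y i) ⁻¹' {u i} := by
      ext y; simp [Nat.lt_succ_iff]
    rw [this]
    exact isClopen_biInter_finset fun i _ =>
      (isClopen_discrete {u i}).preimage (continuous_apply i)
  rw [dense_iff_inter_open]
  rintro U hU ⟨u, hu⟩
  -- find a basic cylinder around u inside U
  have hnb : U ∈ nhds u := hU.mem_nhds hu
  rw [nhds_pi, Filter.mem_pi] at hnb
  obtain ⟨I, hIfin, s, hs, hsub⟩ := hnb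
  obtain ⟨m, hm⟩ := hIfin.bddAbove
  set n : ℕ := max m 1 with hn
  set Y₂ : Set Cantor := {y : Cantor | ∀ i ≤ n, y i = u i} with hY₂
  have hY₂U : Y₂ ⊆ U := by
    intro y hy
    apply hsub
    intro i hi
    have : y i = u i := hy i (le_trans (hm hi) (le_max_left _ _))
    rw [this]
    have := hs i
    simpa [nhds_discrete] using this
  set Y₁ : Set Cantor := {y : Cantor | ∀ i ≤ 1, y i = x i} with hY₁
  set X : Set Cantor := Y₁ ∪ Y₂ with hX
  have hY₁c := cylClopen x 1
  have hY₂c := cylClopen u n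
  have hXc : IsClopen X := hY₁c.union hY₂c
  -- X is proper
  have hXne : X ≠ Set.univ := by
    by_cases h : u 0 = x 0
    · intro hcon
      have hz : Function.update u 0 (!u 0) ∈ X := hcon ▸ Set.mem_univ _
      rcases hz with hz | hz
      · have := hz 0 (le_refl 0 |>.trans (by norm_num))
        simp [Function.update, h] at this
      · have := hz 0 (Nat.zero_le n)
        simp [Function.update] at this
    · intro hcon
      have hz : Function.update u 1 (!u 1) ∈ X := hcon ▸ Set.mem_univ _
      rcases hz with hz | hz
      · have := hz 0 (by norm_num)
        simp [Function.update] at this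
        exact h this
      · have := hz 1 (le_max_right m 1)
        simp [Function.update] at this
  have hY₂ne : Y₂ ≠ ∅ := by
    intro hcon
    have : u ∈ Y₂ := fun i _ => rfl
    rw [hcon] at this
    exact this
  obtain ⟨g, hgA, _, hgim⟩ := hA X Y₁ Y₂
    (hXc.isClosed.isCompact) hXc.isOpen
    (hY₁c.isClosed.isCompact) hY₁c.isOpen
    (hY₂c.isClosed.isCompact) hY₂c.isOpen
    Set.subset_union_left Set.subset_union_right hXne hY₂ne
  have hxY₁ : x ∈ Y₁ := fun i _ => rfl
  have h1 : g x ∈ Y₂ := hgim ⟨x, hxY₁, rfl⟩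
  have h2 : g x ∈ U := hY₂U h1
  have h3 : g x ∈ {y : Cantor | ∃ g ∈ A, y = g x} := ⟨g, hgA, rfl⟩
  exact ⟨g x, h2, h3⟩
end
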